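/- arXiv:1408.1613 — 3 statements merged into one kernel-verified Lean document; each statement's English description precedes it below -/
import Mathlib

section
/- Let E be a vector bundle of rank r ≥ 2 on a smooth projective curve X of genus g, and suppose there is a nontrivial homomorphism f: E → ω_X(−n) (equivalently h^1(E(n)) ≠ 0). Let F = ker(f), a subbundle of rank r−1. If the section-semistability inequality h^0(F(n))·r ≤ h^0(E(n))·(r−1) + (a_1δ_1 + a_2δ_2)·(r−1) holds, and h^0(E(n)) − g ≤ h^0(F(n)) and h^0(E(n)) ≥ deg(E) + r(n+1−g), then n < 2g − μ(E) + a_1δ_1 + a_2δ_2. Equivalently, for n ≥ 2g − μ(E) + a_1δ_1 + a_2δ_2, any (δ_1,δ_2,n)-section-semistable decorated swamp (E,L,φ,s) has h^1(E(n)) = 0. -/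
/-- Vanishing of `h¹` for section-semistable decorated swamps.  Let `E` be a
vector bundle of rank `r ≥ 2` with a nontrivial homomorphism `f : E → ω_X(-n)` (i.e.
`h¹(E(n)) ≠ 0`) and `F = ker f` of rank `r - 1`.  If the section-semistability inequality
`h⁰(F(n))·r ≤ h⁰(E(n))·(r-1) + (a₁δ₁ + a₂δ₂)·(r-1)` holds together with
`h⁰(E(n)) - g ≤ h⁰(F(n))` and the Euler-characteristic (Riemann–Roch) bound
`deg E + r·(n+1-g) ≤ h⁰(E(n))`, then `n < 2g - μ(E) + a₁δ₁ + a₂δ₂`. -/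
theorem section_semistable_h1_vanishing_bound
    (r g : ℕ) (hr : 2 ≤ r) (n : ℤ) (degE : ℤ)
    (h0E h0F : ℕ) (a1 a2 : ℕ) (δ1 δ2 : ℝ) (hδ1 : 0 ≤ δ1) (hδ2 : 0 ≤ δ2)
    (hss : (h0F : ℝ) * (r : ℝ) ≤
      (h0E : ℝ) * ((r : ℝ) - 1) + ((a1 : ℝ) * δ1 + (a2 : ℝ) * δ2) * ((r : ℝ) - 1))
    (hFE : (h0E : ℝ) - (g : ℝ) ≤ (h0F : ℝ))
    (hRR : (degE : ℝ) + (r : ℝ) * ((n : ℝ) + 1 - (g : ℝ)) ≤ (h0E : ℝ)) :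
    (n : ℝ) < 2 * (g : ℝ) - (degE : ℝ) / (r : ℝ) + ((a1 : ℝ) * δ1 + (a2 : ℝ) * δ2) := by
  have hr2 : (2:ℝ) ≤ (r:ℝ) := by exact_mod_cast hr
  have hr0 : (0:ℝ) < (r:ℝ) := by linarith
  have hD : 0 ≤ (a1 : ℝ) * δ1 + (a2 : ℝ) * δ2 := by positivity
  rw [show 2 * (g : ℝ) - (degE : ℝ) / (r : ℝ) + ((a1 : ℝ) * δ1 + (a2 : ℝ) * δ2)
      = (2 * g * r - degE + ((a1 : ℝ) * δ1 + (a2 : ℝ) * δ2) * r) / r by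
    field_simp, lt_div_iff₀ hr0]
  nlinarith [mul_le_mul_of_nonneg_right hFE hr0.le, mul_nonneg hD hr0.le]
end

section
/- Properness slope bound: let E be a vector bundle of rank r on a smooth projective curve with h^0-space Y of dimension p(n) = deg(E) + r(n+1−g), let E → Q be a quotient bundle of minimal slope, U := ker(Y → H^0(Q(n))), and F ⊂ E the subsheaf generated by U. If 0 ≤ p(n)·[(p(n)·rk(F) − r·dim(U)) + (a_1δ_1 + a_2δ_2)(r − rk(F))], dim(U) ≥ dim(Y) − h^0(Q(n)), rk(E) ≥ rk(Q) + rk(F), and h^0(Q(n)) ≤ rk(Q)·[μ(Q) + n + 1]_+ (with the bracket positive), then μ_min(E) = μ(Q) ≥ μ(E) − g − (a_1δ_1 + a_2δ_2)/rk(E). -/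
set_option maxHeartbeats 1000000


/-- Boundedness step in the properness of the Gieseker morphism.  With
`p(n) = deg E + r(n+1-g) = dim Y`, a quotient `E → Q` of minimal slope,
`U = ker(Y → H⁰(Q(n)))` and `F ⊂ E` the subsheaf generated by `U`, the hypotheses
`0 ≤ p(n)·[(p(n)·rk F - r·dim U) + (a₁δ₁+a₂δ₂)(r - rk F)]`,
`dim U ≥ dim Y - h⁰(Q(n))`, `rk E ≥ rk Q + rk F` and
`h⁰(Q(n)) ≤ rk Q·[μ(Q)+n+1]₊` (with positive bracket, and `n` large enough that
`a₁δ₁+a₂δ₂ ≤ p(n)`) imply `μ_min(E) = μ(Q) ≥ μ(E) - g - (a₁δ₁+a₂δ₂)/rk E`. -/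
theorem gieseker_properness_slope_bound
    (r rkQ rkF : ℕ) (hr : 1 ≤ r) (hrkQ : 1 ≤ rkQ)
    (g : ℕ) (n : ℤ) (degE : ℤ) (p h0Q dimU : ℕ) (μQ : ℝ)
    (a1 a2 δ1 δ2 : ℝ) (ha1 : 0 < a1) (ha2 : 0 < a2) (hδ1 : 0 < δ1) (hδ2 : 0 < δ2)
    (hp : (p : ℝ) = (degE : ℝ) + (r : ℝ) * ((n : ℝ) + 1 - (g : ℝ))) (hppos : 0 < p)
    (hlarge : a1 * δ1 + a2 * δ2 ≤ (p : ℝ))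
    (h1 : 0 ≤ (p : ℝ) * (((p : ℝ) * (rkF : ℝ) - (r : ℝ) * (dimU : ℝ))
        + (a1 * δ1 + a2 * δ2) * ((r : ℝ) - (rkF : ℝ))))
    (h2 : (p : ℝ) - (h0Q : ℝ) ≤ (dimU : ℝ))
    (h3 : rkQ + rkF ≤ r)
    (h4 : (h0Q : ℝ) ≤ (rkQ : ℝ) * max (μQ + (n : ℝ) + 1) 0)
    (hbr : 0 < μQ + (n : ℝ) + 1) :
    (degE : ℝ) / (r : ℝ) - (g : ℝ) - (a1 * δ1 + a2 * δ2) / (r : ℝ) ≤ μQ := by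
  set A := a1 * δ1 + a2 * δ2 with hA
  have hr' : (1:ℝ) ≤ (r:ℝ) := by exact_mod_cast hr
  have hrpos : (0:ℝ) < (r:ℝ) := by linarith
  have hrkQ' : (1:ℝ) ≤ (rkQ:ℝ) := by exact_mod_cast hrkQ
  have h3' : (rkQ:ℝ) + (rkF:ℝ) ≤ (r:ℝ) := by exact_mod_cast h3
  have hppos' : (0:ℝ) < (p:ℝ) := by exact_mod_cast hppos
  set B := μQ + (n:ℝ) + 1 with hB
  have h4' : (h0Q:ℝ) ≤ (rkQ:ℝ) * B := by
    rwa [max_eq_left hbr.le] at h4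
  -- from h1, divide by p
  have h1' : 0 ≤ ((p:ℝ) * (rkF:ℝ) - (r:ℝ) * (dimU:ℝ)) + A * ((r:ℝ) - (rkF:ℝ)) :=
    nonneg_of_mul_nonneg_right h1 hppos'
  -- derive (p - A) * (r - rkF) ≤ r * rkQ * B
  have key0 : ((p:ℝ) - A) * ((r:ℝ) - (rkF:ℝ)) ≤ (r:ℝ) * ((rkQ:ℝ) * B) := by
    nlinarith [mul_le_mul_of_nonneg_left h4' hrpos.le, mul_le_mul_of_nonneg_left h2 hrpos.le]
  have key : (p:ℝ) - A ≤ (r:ℝ) * B := by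
    nlinarith [mul_le_mul_of_nonneg_left h3' (sub_nonneg.2 hlarge),
      mul_le_mul_of_nonneg_right key0 (le_of_lt (lt_of_lt_of_le zero_lt_one hrkQ'))]
  rw [sub_sub, sub_le_iff_le_add, div_le_iff₀ hrpos]
  have hAr : A / (r:ℝ) * (r:ℝ) = A := div_mul_cancel₀ A hrpos.ne'
  nlinarith [key, hAr]
end

section
/- Combinatorial identity for level structures: fix integers 0 < r_1 < ... < r_k < r_{k+1} = r (set r_0 = 0), positive reals θ_1,...,θ_r, and define q(s) := Σ_{1 ≤ i ≤ s} θ_i·i + Σ_{s < i ≤ r} θ_i·s − (s/r)·Σ_{i=1}^r θ_i·i. Let F' ⊂ V be a subspace of a vector space V with a descending flag W_• of type dim W_j = r − r_j, set W̄_j := F' ∩ W_j, and c_i(F', W_•) := min{dim(F'/W̄_{j^+(i)}), dim(F'/W̄_{j_-(i)}) + i − i_-} with the index conventions j_-(i) = max{j : r_j < i}, j^+(i) = min{j : i ≤ r_j}, i_- = r_{j_-(i)}. Then Σ_{i=1}^r θ_i·( r·c_i(F', W_•) − dim(F')·i ) = r·Σ_{s ∈ {r_1,...,r_{k+1}}}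 [ q( s_- + dim(W̄_{j_-(s)}/W̄_{j^+(s)}) ) − q(s_-) ], where s_- = r_{j_-(s)}. -/
/-!
Write `e_t = dim(F'/W̄_{t+1}) - dim(F'/W̄_t)`. Since `W̄_t/W̄_{t+1}` embeds into `W_t/W_{t+1}`, we have
`e_t ≤ r_{t+1} - r_t`, so the intervals `[r_t, r_t + e_t]` are disjoint and ordered, and `c_i` is the length of
the part of their union lying in `[0, i]`: `c_i = ∑_t (min(i, r_t + e_t) - min(i, r_t))`. As
`q(s) = ∑_i θ_i min(i, s) - (s/r) ∑_i θ_i i`, the identity follows by exchanging the sums over `i` and `t`,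
the linear terms adding up to `∑_t e_t = dim F'`.
-/

open Module Submodule

/-- The concave piecewise-linear function
`q(s) = ∑_{1 ≤ i ≤ s} θ_i·i + ∑_{s < i ≤ r} θ_i·s - (s/r)·∑_{i=1}^r θ_i·i`
(indices `i ∈ {1,…,r}` are modeled by `i : Fin r` via `i ↦ i+1`). -/
noncomputable def levelQ (r : ℕ) (θ : Fin r → ℝ) (s : ℕ) : ℝ :=
  (∑ i ∈ Finset.univ.filter (fun i : Fin r => (i : ℕ) + 1 ≤ s), θ i * ((i : ℕ) + 1))
    + (∑ i ∈ Finset.univ.filter (fun i : Fin r => s < (i : ℕ) + 1), θ i * (s : ℝ))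
    - ((s : ℝ) / (r : ℝ)) * ∑ i : Fin r, θ i * ((i : ℕ) + 1)


open Finset

theorem levelQ_eq_sum_min (r : ℕ) (θ : Fin r → ℝ) (s : ℕ) :
    levelQ r θ s = ∑ i : Fin r, θ i * (min ((i : ℕ) + 1) s : ℕ) -
      s / r * ∑ i : Fin r, θ i * ((i : ℕ) + 1) := by
  have h_min : ∀ i : Fin r, θ i * ((min ((i : ℕ) + 1) s : ℕ) : ℝ) =
      if (i : ℕ) + 1 ≤ s then θ i * ((i : ℕ) + 1) else θ i * s := by
    intro i
    split_ifs with h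
    · rw [min_eq_left h]; push_cast; rfl
    · rw [min_eq_right (by omega)]
  simp only [h_min, sum_ite, not_le, levelQ]

-- Multiplied through by `r`, this also holds for `r = 0`, where `s / r = 0`.
theorem mul_levelQ_sub_levelQ (r : ℕ) (θ : Fin r → ℝ) (a b : ℕ) :
    r * (levelQ r θ b - levelQ r θ a) = ∑ i : Fin r, θ i *
      (r * (((min ((i : ℕ) + 1) b : ℕ) : ℝ) - (min ((i : ℕ) + 1) a : ℕ)) - (b - a) * ((i : ℕ) + 1)) := by
  rcases eq_or_ne r 0 with rfl | hr
  · simp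
  calc r * (levelQ r θ b - levelQ r θ a)
      = r * ∑ i : Fin r, θ i * (((min ((i : ℕ) + 1) b : ℕ) : ℝ) - (min ((i : ℕ) + 1) a : ℕ)) -
          (b - a) * ∑ i : Fin r, θ i * ((i : ℕ) + 1) := by
        simp only [levelQ_eq_sum_min, mul_sub, sum_sub_distrib]
        field_simp
        ring
    _ = _ := by
        rw [mul_sum, mul_sum, ← sum_sub_distrib]
        exact sum_congr rfl fun i _ => by ring

theorem sum_range_min_sub_min {E R : ℕ → ℕ} (hE : Monotone E)
    (hER : ∀ t, R t + (E (t + 1) - E t) ≤ R (t + 1)) {n j x : ℕ} (hjn : j < n)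
    (hRx : R j < x) (hxR : x ≤ R (j + 1)) :
    ∑ t ∈ range n, (min x (R t + (E (t + 1) - E t)) - min x (R t)) =
      min (E (j + 1)) (E j + x - R j) - E 0 := by
  have hR : Monotone R := monotone_nat_of_le_succ fun t => le_self_add.trans (hER t)
  have h_below : ∑ t ∈ range j, (min x (R t + (E (t + 1) - E t)) - min x (R t)) = E j - E 0 := by
    rw [← sum_range_tsub hE]
    refine sum_congr rfl fun t ht => ?_
    have := (hER t).trans (hR (mem_range.mp ht))
    omega
  have h_above : ∀ t ∈ Ico j n, t ≠ j → min x (R t + (E (t + 1) - E t)) - min x (R t) = 0 := by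
    intro t ht htj
    have := hxR.trans (hR (show j + 1 ≤ t by rw [mem_Ico] at ht; omega))
    omega
  rw [← sum_range_add_sum_Ico _ hjn.le, sum_eq_single_of_mem j (mem_Ico.mpr ⟨le_rfl, hjn⟩) h_above,
    h_below]
  have : E j ≤ E (j + 1) := hE (by omega)
  have : E 0 ≤ E j := hE (by omega)
  omega

theorem sum_mul_min_sub_eq_mul_sum_range_levelQ_sub (r : ℕ) (θ : Fin r → ℝ) {E R : ℕ → ℕ}
    (hE : Monotone E) (hE0 : E 0 = 0) (hER : ∀ t, R t + (E (t + 1) - E t) ≤ R (t + 1))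
    {n : ℕ} (J : Fin r → ℕ) (hJn : ∀ i, J i < n)
    (hRJ : ∀ i : Fin r, R (J i) < (i : ℕ) + 1) (hJR : ∀ i : Fin r, (i : ℕ) + 1 ≤ R (J i + 1)) :
    ∑ i : Fin r, θ i * ((r : ℝ) * (min (E (J i + 1)) (E (J i) + ((i : ℕ) + 1) - R (J i)) : ℝ) -
        (E n : ℝ) * ((i : ℕ) + 1)) =
      r * ∑ t ∈ range n, (levelQ r θ (R t + (E (t + 1) - E t)) - levelQ r θ (R t)) := by
  have h_len : ∑ t ∈ range n, (((R t + (E (t + 1) - E t) : ℕ) : ℝ) - R t) = E n := by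
    simp only [Nat.cast_add, add_sub_cancel_left]
    rw [← Nat.cast_sum, sum_range_tsub hE, hE0, Nat.sub_zero]
  have h_min (i : Fin r) : ∑ t ∈ range n, (((min ((i : ℕ) + 1) (R t + (E (t + 1) - E t)) : ℕ) : ℝ) -
      (min ((i : ℕ) + 1) (R t) : ℕ)) = min (E (J i + 1) : ℝ) (E (J i) + ((i : ℕ) + 1) - R (J i)) := by
    have h := sum_range_min_sub_min hE hER (hJn i) (hRJ i) (hJR i)
    rw [hE0, Nat.sub_zero] at h
    simp_rw [← Nat.cast_sub (min_le_min_left _ le_self_add)]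
    rw [← Nat.cast_sum, h, Nat.cast_min, Nat.cast_sub (by have := hRJ i; omega)]
    push_cast
    rfl
  simp_rw [mul_sum, mul_levelQ_sub_levelQ]
  rw [sum_comm]
  refine sum_congr rfl fun i _ => ?_
  rw [← h_min i, ← h_len, mul_sum, sum_mul, ← sum_sub_distrib, mul_sum]

theorem Monotone.val_eq_add_one_of_isGreatest_of_isLeast {α : Type*} [LinearOrder α] {m : ℕ}
    {f : Fin m → α} (hf : Monotone f) {x : α} {a b : Fin m}
    (ha : IsGreatest {j | f j < x} a) (hb : IsLeast {j | x ≤ f j} b) : (b : ℕ) = a + 1 := by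
  have hab : a < b := lt_of_not_ge fun hba => (hb.1.trans (hf hba)).not_gt ha.1
  have hsucc : (a : ℕ) + 1 < m := by omega
  have hx : x ≤ f ⟨a + 1, hsucc⟩ := not_lt.mp fun hc => absurd (ha.2 hc) (by simp [Fin.le_def])
  have : (b : ℕ) ≤ a + 1 := hb.2 hx
  omega

theorem Fin.clamp_val {m : ℕ} (j : Fin (m + 1)) : Fin.clamp j m = j :=
  Fin.ext (min_eq_left (Nat.lt_succ_iff.mp j.isLt))

theorem Fin.clamp_val_castSucc {m : ℕ} (t : Fin (m + 1)) : Fin.clamp t (m + 1) = t.castSucc :=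
  Fin.clamp_val t.castSucc

theorem Fin.clamp_val_add_one {m : ℕ} (t : Fin (m + 1)) : Fin.clamp (t + 1) (m + 1) = t.succ :=
  Fin.clamp_val t.succ

theorem sum_mul_min_sub_eq_mul_sum_levelQ_sub (r : ℕ) (θ : Fin r → ℝ) {n : ℕ}
    {E R : Fin (n + 2) → ℕ} (hE : Monotone E) (hE0 : E 0 = 0)
    (hER : ∀ t : Fin (n + 1), R t.castSucc + (E t.succ - E t.castSucc) ≤ R t.succ)
    (jm jp : Fin r → Fin (n + 2)) (hjp : ∀ i, (jp i : ℕ) = jm i + 1)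
    (hRjm : ∀ i : Fin r, R (jm i) < (i : ℕ) + 1) (hRjp : ∀ i : Fin r, (i : ℕ) + 1 ≤ R (jp i)) :
    ∑ i : Fin r, θ i * ((r : ℝ) * (min (E (jp i)) (E (jm i) + ((i : ℕ) + 1) - R (jm i)) : ℝ) -
        (E (Fin.last (n + 1)) : ℝ) * ((i : ℕ) + 1)) =
      r * ∑ t : Fin (n + 1),
        (levelQ r θ (R t.castSucc + (E t.succ - E t.castSucc)) - levelQ r θ (R t.castSucc)) := by
  have h_jp (i : Fin r) : Fin.clamp (jm i + 1) (n + 1) = jp i := by rw [← hjp, Fin.clamp_val]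
  have h_ext := sum_mul_min_sub_eq_mul_sum_range_levelQ_sub r θ (E := fun t => E (Fin.clamp t (n + 1)))
    (R := fun t => R (Fin.clamp t (n + 1))) (n := n + 1) (hE.comp Fin.clamp_monotone) hE0 ?_
    (fun i => jm i) (fun i => by have := hjp i; have := (jp i).isLt; omega) ?_ ?_
  · rw [← Fin.sum_univ_eq_sum_range] at h_ext
    simpa only [Fin.clamp_val, h_jp, Fin.clamp_eq_last _ _ le_rfl, Fin.clamp_val_castSucc,
      Fin.clamp_val_add_one] using h_ext
  · intro t
    rcases lt_or_ge t (n + 1) with ht | ht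
    · simpa only [Fin.clamp_val_castSucc ⟨t, ht⟩, Fin.clamp_val_add_one ⟨t, ht⟩] using hER ⟨t, ht⟩
    · simp only [Fin.clamp_eq_last _ _ ht, Fin.clamp_eq_last _ _ (ht.trans t.le_succ)]
      omega
  · simpa only [Fin.clamp_val] using hRjm
  · simpa only [h_jp] using hRjp

namespace Submodule

variable {K V : Type*} [DivisionRing K] [AddCommGroup V] [Module K V] [FiniteDimensional K V]

theorem finrank_map_mkQ_add_finrank_inf (F W : Submodule K V) :
    finrank K (F.map W.mkQ) + finrank K (F ⊓ W : Submodule K V) = finrank K F := by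
  have h := LinearMap.finrank_range_add_finrank_ker (W.mkQ.domRestrict F)
  rwa [LinearMap.range_domRestrict, LinearMap.ker_domRestrict, ker_mkQ,
    ← finrank_map_subtype_eq, map_comap_subtype] at h

theorem finrank_map_mkQ_antitone (F : Submodule K V) :
    Antitone fun W : Submodule K V => finrank K (F.map W.mkQ) := by
  intro W' W h
  dsimp only
  have := finrank_map_mkQ_add_finrank_inf F W
  have := finrank_map_mkQ_add_finrank_inf F W'
  have : finrank K (F ⊓ W' : Submodule K V) ≤ finrank K (F ⊓ W : Submodule K V) :=
    finrank_mono (inf_le_inf_left F h)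
  omega

theorem finrank_map_mkQ_add_finrank_le (F : Submodule K V) {W W' : Submodule K V} (h : W' ≤ W) :
    finrank K (F.map W'.mkQ) + finrank K W' ≤ finrank K (F.map W.mkQ) + finrank K W := by
  have h_dim := finrank_sup_add_finrank_inf_eq (F ⊓ W) W'
  rw [inf_assoc, inf_eq_right.mpr h] at h_dim
  have : finrank K ((F ⊓ W ⊔ W' : Submodule K V)) ≤ finrank K W :=
    finrank_mono (sup_le inf_le_right h)
  have := finrank_map_mkQ_add_finrank_inf F W
  have := finrank_map_mkQ_add_finrank_inf F W'
  omega

end Submodule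

theorem level_structure_combinatorial_identity_general
    {V : Type*} [AddCommGroup V] [Module ℂ V] [FiniteDimensional ℂ V]
    (r k : ℕ)
    (θ : Fin r → ℝ)
    (rseq : Fin (k + 2) → ℕ) (hrseq : StrictMono rseq)
    (W : Fin (k + 2) → Submodule ℂ V) (hWanti : StrictAnti W)
    (hW0 : W 0 = ⊤) (hWlast : W (Fin.last (k + 1)) = ⊥)
    (hWdim : ∀ j, finrank ℂ (W j) = r - rseq j)
    (jm jp : Fin r → Fin (k + 2))
    (hjm : ∀ i : Fin r, rseq (jm i) < (i : ℕ) + 1 ∧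
      ∀ j, rseq j < (i : ℕ) + 1 → j ≤ jm i)
    (hjp : ∀ i : Fin r, (i : ℕ) + 1 ≤ rseq (jp i) ∧
      ∀ j, (i : ℕ) + 1 ≤ rseq j → jp i ≤ j)
    (F' : Submodule ℂ V) :
    ∑ i : Fin r, θ i *
        ((r : ℝ) * (min (finrank ℂ (F'.map (W (jp i)).mkQ))
            (finrank ℂ (F'.map (W (jm i)).mkQ) + ((i : ℕ) + 1) - rseq (jm i)) : ℝ) -
          (finrank ℂ F' : ℝ) * ((i : ℕ) + 1)) =
      (r : ℝ) * ∑ t : Fin (k + 1),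
        (levelQ r θ (rseq t.castSucc +
            (finrank ℂ (F' ⊓ W t.castSucc : Submodule ℂ V) -
              finrank ℂ (F' ⊓ W t.succ : Submodule ℂ V))) -
          levelQ r θ (rseq t.castSucc)) := by
  set E : Fin (k + 2) → ℕ := fun j => finrank ℂ (F'.map (W j).mkQ)
  have h_rank (j : Fin (k + 2)) : E j + finrank ℂ (F' ⊓ W j : Submodule ℂ V) = finrank ℂ F' :=
    F'.finrank_map_mkQ_add_finrank_inf (W j)
  have hE0 : E 0 = 0 := by
    have := h_rank 0
    rw [hW0, inf_top_eq] at this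
    omega
  have hE_last : E (Fin.last (k + 1)) = finrank ℂ F' := by
    have := h_rank (Fin.last _)
    rw [hWlast, inf_bot_eq, finrank_bot] at this
    omega
  have h_jump (t : Fin (k + 1)) : finrank ℂ (F' ⊓ W t.castSucc : Submodule ℂ V) -
      finrank ℂ (F' ⊓ W t.succ : Submodule ℂ V) = E t.succ - E t.castSucc := by
    have := h_rank t.castSucc
    have := h_rank t.succ
    omega
  have hER (t : Fin (k + 1)) : rseq t.castSucc + (E t.succ - E t.castSucc) ≤ rseq t.succ := by
    have h_le : E t.succ + finrank ℂ (W t.succ) ≤ E t.castSucc + finrank ℂ (W t.castSucc) :=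
      F'.finrank_map_mkQ_add_finrank_le (hWanti.antitone t.castSucc_le_succ)
    have := hrseq.monotone t.castSucc_le_succ
    rw [hWdim, hWdim] at h_le
    omega
  simp only [h_jump, ← hE_last]
  exact sum_mul_min_sub_eq_mul_sum_levelQ_sub r θ
    (F'.finrank_map_mkQ_antitone.comp hWanti.antitone) hE0 hER jm jp
    (fun i => hrseq.monotone.val_eq_add_one_of_isGreatest_of_isLeast (hjm i) (hjp i))
    (fun i => (hjm i).1) (fun i => (hjp i).1)

/-- Combinatorial identity for level structures.  For a subspace
`F' ⊆ V` with `W̄_j = F' ∩ W_j` (where `W_•` is a descending flag of type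
`dim W_j = r - r_j`, `0 = r_0 < r_1 < ⋯ < r_{k+1} = r`) and
`c_i(F', W_•) = min{dim(F'/W̄_{j^+(i)}), dim(F'/W̄_{j_-(i)}) + i - i_-}`, one has
`∑_{i=1}^r θ_i (r·c_i(F',W_•) - dim F'·i)
  = r·∑_{s ∈ {r_1,…,r_{k+1}}} [q(s_- + dim(W̄_{j_-(s)}/W̄_{j^+(s)})) - q(s_-)]`. -/
theorem level_structure_combinatorial_identity
    {V : Type*} [AddCommGroup V] [Module ℂ V] [FiniteDimensional ℂ V]
    (r k : ℕ) (hrV : finrank ℂ V = r)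
    (θ : Fin r → ℝ) (hθ : ∀ i, 0 < θ i)
    (rseq : Fin (k + 2) → ℕ) (hrseq : StrictMono rseq)
    (hr0 : rseq 0 = 0) (hrlast : rseq (Fin.last (k + 1)) = r)
    (W : Fin (k + 2) → Submodule ℂ V) (hWanti : StrictAnti W)
    (hW0 : W 0 = ⊤) (hWlast : W (Fin.last (k + 1)) = ⊥)
    (hWdim : ∀ j, finrank ℂ (W j) = r - rseq j)
    (jm jp : Fin r → Fin (k + 2))
    (hjm : ∀ i : Fin r, rseq (jm i) < (i : ℕ) + 1 ∧
      ∀ j, rseq j < (i : ℕ) + 1 → j ≤ jm i)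
    (hjp : ∀ i : Fin r, (i : ℕ) + 1 ≤ rseq (jp i) ∧
      ∀ j, (i : ℕ) + 1 ≤ rseq j → jp i ≤ j)
    (F' : Submodule ℂ V) :
    ∑ i : Fin r, θ i *
        ((r : ℝ) * (min (finrank ℂ (F'.map (W (jp i)).mkQ))
            (finrank ℂ (F'.map (W (jm i)).mkQ) + ((i : ℕ) + 1) - rseq (jm i)) : ℝ) -
          (finrank ℂ F' : ℝ) * ((i : ℕ) + 1)) =
      (r : ℝ) * ∑ t : Fin (k + 1),
        (levelQ r θ (rseq t.castSucc +
            (finrank ℂ (F' ⊓ W t.castSucc : Submodule ℂ V) -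
              finrank ℂ (F' ⊓ W t.succ : Submodule ℂ V))) -
          levelQ r θ (rseq t.castSucc)) :=
  level_structure_combinatorial_identity_general r k θ rseq hrseq W hWanti hW0 hWlast hWdim jm jp
    hjm hjp F'
end
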